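/- arXiv:math/0409514 — 6 statements merged into one kernel-verified Lean document; each statement's English description precedes it below -/
import Mathlib

section
/- Let ⋆ be a semistar operation on an integral domain D and let ⋆_f be the associated finite-type semistar operation. A nonzero D-submodule I of K is ⋆_f-finite if and only if there exists a nonzero finitely generated D-submodule J with J ⊆ I and J^⋆ = I^⋆. -/
open Submodule

structure SemistarOperation (R K : Type*) [CommRing R] [Field K] [Algebra R K] where
  star : Submodule R K → Submodule R K
  star_smul : ∀ (x : K), x ≠ 0 → ∀ E : Submodule R K, E ≠ ⊥ →
    star (E.map (LinearMap.mul R K x)) = (star E).map (LinearMap.mul R K x)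
  star_mono : ∀ E F : Submodule R K, E ≠ ⊥ → F ≠ ⊥ → E ≤ F → star E ≤ star F
  le_star : ∀ E : Submodule R K, E ≠ ⊥ → E ≤ star E
  star_idem : ∀ E : Submodule R K, E ≠ ⊥ → star (star E) = star E

variable {R K : Type*} [CommRing R] [Field K] [Algebra R K]

def starF (s : SemistarOperation R K) (E : Submodule R K) : Submodule R K :=
  ⨆ (F : Submodule R K) (_ : F ≤ E ∧ F ≠ ⊥ ∧ F.FG), s.star F

def IsFiniteTypeOp (s : SemistarOperation R K) : Prop :=
  ∀ E : Submodule R K, E ≠ ⊥ → s.star E = starF s E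

def IsStableOp (s : SemistarOperation R K) : Prop :=
  ∀ E F : Submodule R K, E ≠ ⊥ → F ≠ ⊥ → E ⊓ F ≠ ⊥ → s.star (E ⊓ F) = s.star E ⊓ s.star F

def IsFracIdeal (I : Submodule R K) : Prop :=
  I ≠ ⊥ ∧ ∃ d : R, d ≠ 0 ∧ ∀ x ∈ I, algebraMap R K d * x ∈ (1 : Submodule R K)

def IsStarInv (s : SemistarOperation R K) (I : Submodule R K) : Prop :=
  s.star (I * ((1 : Submodule R K) / I)) = s.star 1

def IsQuasiStarInv (s : SemistarOperation R K) (I : Submodule R K) : Prop :=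
  s.star (I * (s.star 1 / I)) = s.star 1

def QuasiStarIdeal (f : Submodule R K → Submodule R K) (I : Ideal R) : Prop :=
  I ≠ ⊥ ∧ (f (Submodule.map (Algebra.linearMap R K) I)).comap (Algebra.linearMap R K) = I

def QuasiStarMax (f : Submodule R K → Submodule R K) (I : Ideal R) : Prop :=
  QuasiStarIdeal f I ∧ I ≠ ⊤ ∧ ∀ J : Ideal R, QuasiStarIdeal f J → J ≠ ⊤ → I ≤ J → I = J

def HStarDomain (s : SemistarOperation R K) : Prop :=
  ∀ I : Ideal R, I ≠ ⊥ → s.star (Submodule.map (Algebra.linearMap R K) I) = s.star 1 →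
    ∃ J : Ideal R, J ≠ ⊥ ∧ J.FG ∧ J ≤ I ∧ s.star (Submodule.map (Algebra.linearMap R K) J) = s.star 1

def locAt (Q : Ideal R) : Submodule R K :=
  span R {x : K | ∃ s : R, s ∉ Q ∧ x * algebraMap R K s = 1}

def starTilde (s : SemistarOperation R K) (E : Submodule R K) : Submodule R K :=
  ⨅ (Q : Ideal R) (_ : QuasiStarMax (starF s) Q), E * locAt Q

variable {D K : Type*} [CommRing D] [IsDomain D] [Field K] [Algebra D K] [IsFractionRing D K]

lemma aux_starF_le_star (s : SemistarOperation D K) (E : Submodule D K) (hE : E ≠ ⊥) :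
    starF s E ≤ s.star E := by
  refine iSup₂_le fun F hF => s.star_mono F E hF.2.1 hE hF.1

lemma aux_le_starF (s : SemistarOperation D K) (E : Submodule D K) (hE : E ≠ ⊥) :
    E ≤ starF s E := by
  intro x hx
  by_cases hx0 : x = 0
  · exact hx0 ▸ (starF s E).zero_mem
  · have hle : span D {x} ≤ E := by simpa [Submodule.span_le] using hx
    have hne : span D ({x} : Set K) ≠ ⊥ := by
      simp [Submodule.span_singleton_eq_bot, hx0]
    have : x ∈ s.star (span D {x}) :=
      s.le_star _ hne (Submodule.mem_span_singleton_self x)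
    have hle2 : s.star (span D {x}) ≤ starF s E :=
      le_iSup₂_of_le (span D {x}) ⟨hle, hne, Submodule.fg_span_singleton x⟩ le_rfl
    exact hle2 this

lemma aux_starF_fg (s : SemistarOperation D K) (J : Submodule D K) (hJ : J ≠ ⊥) (hfg : J.FG) :
    starF s J = s.star J := by
  refine le_antisymm (aux_starF_le_star s J hJ) ?_
  exact le_iSup₂_of_le J ⟨le_rfl, hJ, hfg⟩ le_rfl

lemma aux_mem_starF (s : SemistarOperation D K) (E : Submodule D K) (hE : E ≠ ⊥)
    (x : K) (hx : x ∈ starF s E) :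
    ∃ F : Submodule D K, F ≤ E ∧ F ≠ ⊥ ∧ F.FG ∧ x ∈ s.star F := by
  have hrw : starF s E = ⨆ F : {F : Submodule D K // F ≤ E ∧ F ≠ ⊥ ∧ F.FG}, s.star F.1 := by
    rw [starF, iSup_subtype]
  rw [hrw] at hx
  obtain ⟨y, hyE, hy0⟩ := Submodule.exists_mem_ne_zero_of_ne_bot hE
  have hyle : span D {y} ≤ E := by simpa [Submodule.span_le] using hyE
  have hyne : span D ({y} : Set K) ≠ ⊥ := by
    simp [Submodule.span_singleton_eq_bot, hy0]
  haveI : Nonempty {F : Submodule D K // F ≤ E ∧ F ≠ ⊥ ∧ F.FG} :=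
    ⟨⟨span D {y}, hyle, hyne, Submodule.fg_span_singleton y⟩⟩
  have hdir : Directed (· ≤ ·)
      (fun F : {F : Submodule D K // F ≤ E ∧ F ≠ ⊥ ∧ F.FG} => s.star F.1) := by
    rintro ⟨F₁, h₁⟩ ⟨F₂, h₂⟩
    have hsup : F₁ ⊔ F₂ ≠ ⊥ := fun h => h₁.2.1 (le_bot_iff.mp (h ▸ le_sup_left))
    refine ⟨⟨F₁ ⊔ F₂, sup_le h₁.1 h₂.1, hsup, h₁.2.2.sup h₂.2.2⟩, ?_, ?_⟩
    · exact s.star_mono _ _ h₁.2.1 hsup le_sup_left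
    · exact s.star_mono _ _ h₂.2.1 hsup le_sup_right
  obtain ⟨⟨F, hF⟩, hxF⟩ := (Submodule.mem_iSup_of_directed _ hdir).mp hx
  exact ⟨F, hF.1, hF.2.1, hF.2.2, hxF⟩

theorem stmt3 (s : SemistarOperation D K) (I : Submodule D K) (hI : I ≠ ⊥) :
    (∃ J : Submodule D K, J ≠ ⊥ ∧ J.FG ∧ starF s J = starF s I) ↔
    (∃ J : Submodule D K, J ≠ ⊥ ∧ J.FG ∧ J ≤ I ∧ s.star J = s.star I) := by
  constructor
  · rintro ⟨J, hJ0, hJfg, hJeq⟩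
    obtain ⟨S, hS⟩ := hJfg
    -- for each generator of J, find a fg submodule of I
    have hchoice : ∀ x : K, x ∈ (S : Set K) →
        ∃ F : Submodule D K, F ≤ I ∧ F ≠ ⊥ ∧ F.FG ∧ x ∈ s.star F := by
      intro x hxS
      have hxJ : x ∈ J := hS ▸ Submodule.subset_span hxS
      have hx' : x ∈ starF s I := hJeq ▸ aux_le_starF s J hJ0 hxJ
      exact aux_mem_starF s I hI x hx'
    choose! F hFle hFne hFfg hFmem using hchoice
    -- S is nonempty since J ≠ ⊥
    have hSne : S.Nonempty := by
      rcases S.eq_empty_or_nonempty with h | h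
      · exfalso; apply hJ0; rw [← hS, h]; simp
      · exact h
    set J' : Submodule D K := S.sup F with hJ'
    obtain ⟨x₀, hx₀⟩ := hSne
    have hJ'ne : J' ≠ ⊥ := by
      intro h
      exact hFne x₀ hx₀ (le_bot_iff.mp (h ▸ Finset.le_sup (f := F) hx₀))
    have hJ'le : J' ≤ I := Finset.sup_le fun x hx => hFle x hx
    have hJ'fg : J'.FG := Submodule.fg_finset_sup S F fun x hx => hFfg x hx
    have hJ'star_ne : s.star J' ≠ ⊥ := fun h =>
      hJ'ne (le_bot_iff.mp (h ▸ s.le_star J' hJ'ne))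
    -- J ≤ s.star J'
    have hJle : J ≤ s.star J' := by
      rw [← hS, Submodule.span_le]
      intro x hx
      exact s.star_mono (F x) J' (hFne x hx) hJ'ne (Finset.le_sup hx) (hFmem x hx)
    -- I ≤ s.star J'
    have hIle : I ≤ s.star J' := by
      calc I ≤ starF s I := aux_le_starF s I hI
        _ = starF s J := hJeq.symm
        _ = s.star J := aux_starF_fg s J hJ0 ⟨S, hS⟩
        _ ≤ s.star (s.star J') := s.star_mono J _ hJ0 hJ'star_ne hJle
        _ = s.star J' := s.star_idem J' hJ'ne
    refine ⟨J', hJ'ne, hJ'fg, hJ'le, le_antisymm (s.star_mono J' I hJ'ne hI hJ'le) ?_⟩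
    calc s.star I ≤ s.star (s.star J') := s.star_mono I _ hI hJ'star_ne hIle
      _ = s.star J' := s.star_idem J' hJ'ne
  · rintro ⟨J, hJ0, hJfg, hJle, hJeq⟩
    refine ⟨J, hJ0, hJfg, ?_⟩
    rw [aux_starF_fg s J hJ0 hJfg]
    refine le_antisymm ?_ (aux_starF_le_star s I hI |>.trans (hJeq ▸ le_rfl))
    exact le_iSup₂_of_le J ⟨hJle, hJ0, hJfg⟩ le_rfl
end

section
/- Let ⋆ be a semistar operation on an integral domain D, and let I be a nonzero fractional ideal. Then I is ⋆_f-invertible if and only if there exist nonzero finitely generated fractional ideals I' ⊆ I and I'' ⊆ I^{-1} with (I' I'')^⋆ = D^⋆; moreover in that case (I')^⋆ = I^⋆ and (I'')^⋆ = (I^{-1})^⋆. -/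
/-! Both directions rest on one observation: `(1 : K)` lies in `(I I⁻¹)^{⋆_f}` exactly when it lies
in `F^⋆` for a finitely generated `F ⊆ I I⁻¹`, and such an `F` sits inside `I' I''` for finitely
generated `I' ⊆ I`, `I'' ⊆ I⁻¹`. For the last claim, `(I' I'')^⋆ = D^⋆` gives
`I^⋆ = (I (I' I'')^⋆)^⋆ = (I I' I'')^⋆ ⊆ (I')^⋆` because `I I'' ⊆ I I⁻¹ ⊆ D`, and symmetrically
for `I''`. -/

open Submodule

variable {R K : Type*} [CommRing R] [Field K] [Algebra R K]

variable {D K : Type*} [CommRing D] [IsDomain D] [Field K] [Algebra D K] [IsFractionRing D K]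

section

variable {R A : Type*} [CommSemiring R] [Semiring A] [Algebra R A]

theorem Submodule.one_ne_bot [Nontrivial A] : (1 : Submodule R A) ≠ ⊥ :=
  (Submodule.ne_bot_iff _).2 ⟨1, one_le.1 le_rfl, one_ne_zero⟩

theorem Submodule.mul_ne_bot [NoZeroDivisors A] {M N : Submodule R A} (hM : M ≠ ⊥)
    (hN : N ≠ ⊥) : M * N ≠ ⊥ := by
  simpa only [Ne, mul_eq_bot, not_or] using ⟨hM, hN⟩

theorem Submodule.FG.exists_fg_le_mul {F P Q : Submodule R A} (hF : F.FG) (hle : F ≤ P * Q) :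
    ∃ P₀ Q₀ : Submodule R A, P₀ ≤ P ∧ Q₀ ≤ Q ∧ P₀.FG ∧ Q₀.FG ∧ F ≤ P₀ * Q₀ := by
  classical
  obtain ⟨t, rfl⟩ := hF
  rw [span_le, mul_eq_span_mul_set] at hle
  obtain ⟨U, hU, htU⟩ := subset_span_finite_of_subset_span hle
  obtain ⟨T, T', hT, hT', hUT⟩ := Finset.subset_mul hU
  refine ⟨span R T, span R T', span_le.2 hT, span_le.2 hT', fg_span T.finite_toSet,
    fg_span T'.finite_toSet, ?_⟩
  rw [span_mul_span, span_le]
  exact htU.trans (span_mono (by exact_mod_cast hUT))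

end

namespace SemistarOperation

variable {R K : Type*} [CommRing R] [Field K] [Algebra R K] (s : SemistarOperation R K)
  {E F P Q P₀ Q₀ : Submodule R K}

theorem star_ne_bot (hE : E ≠ ⊥) : s.star E ≠ ⊥ :=
  fun h => hE (le_bot_iff.1 (h ▸ s.le_star E hE))

theorem mul_star_le_star_mul (hF : F ≠ ⊥) : E * s.star F ≤ s.star (E * F) := by
  rw [mul_le]
  intro e he g hg
  rcases eq_or_ne e 0 with rfl | he0
  · simpa only [zero_mul] using zero_mem _
  have hmap : F.map (LinearMap.mul R K e) ≤ E * F := by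
    rintro _ ⟨f, hf, rfl⟩
    exact mul_mem_mul he hf
  have hmap_ne : F.map (LinearMap.mul R K e) ≠ ⊥ := by
    obtain ⟨f, hf, hf0⟩ := (Submodule.ne_bot_iff F).1 hF
    exact (Submodule.ne_bot_iff _).2 ⟨e * f, ⟨f, hf, rfl⟩, mul_ne_zero he0 hf0⟩
  -- `⋆` commutes with multiplication by `e ≠ 0`, so `e F^⋆ = (e F)^⋆ ⊆ (E F)^⋆`.
  have : e * g ∈ s.star (F.map (LinearMap.mul R K e)) := by
    rw [s.star_smul e he0 F hF]
    exact ⟨g, hg, rfl⟩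
  exact s.star_mono _ _ hmap_ne (ne_bot_of_le_ne_bot hmap_ne hmap) hmap this

theorem star_mul_star (hE : E ≠ ⊥) (hF : F ≠ ⊥) : s.star (E * s.star F) = s.star (E * F) := by
  have hEF : E * F ≠ ⊥ := mul_ne_bot hE hF
  have hEsF : E * s.star F ≠ ⊥ := mul_ne_bot hE (s.star_ne_bot hF)
  refine le_antisymm ?_ (s.star_mono _ _ hEF hEsF (mul_le_mul_right (s.le_star F hF) E))
  calc s.star (E * s.star F) ≤ s.star (s.star (E * F)) :=
        s.star_mono _ _ hEsF (s.star_ne_bot hEF) (s.mul_star_le_star_mul hF)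
    _ = s.star (E * F) := s.star_idem _ hEF

theorem star_eq_star_one (hE : E ≠ ⊥) (hle : E ≤ 1) (h1 : (1 : K) ∈ s.star E) :
    s.star E = s.star 1 := by
  refine le_antisymm (s.star_mono _ _ hE one_ne_bot hle) ?_
  calc s.star 1 ≤ s.star (s.star E) :=
        s.star_mono _ _ one_ne_bot (s.star_ne_bot hE) (one_le.2 h1)
    _ = s.star E := s.star_idem _ hE

theorem star_eq_of_mul_le_one (hPQ : P * Q ≤ 1) (hP₀ : P₀ ≤ P) (hQ₀ : Q₀ ≤ Q) (hP₀_ne : P₀ ≠ ⊥)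
    (hQ₀_ne : Q₀ ≠ ⊥) (h : s.star (P₀ * Q₀) = s.star 1) : s.star P₀ = s.star P := by
  have hP : P ≠ ⊥ := ne_bot_of_le_ne_bot hP₀_ne hP₀
  have hPQ₀ : P₀ * Q₀ ≠ ⊥ := mul_ne_bot hP₀_ne hQ₀_ne
  have hle : P * (P₀ * Q₀) ≤ P₀ :=
    calc P * (P₀ * Q₀) = P₀ * (P * Q₀) := by ring
      _ ≤ P₀ * 1 := mul_le_mul_right ((mul_le_mul_right hQ₀ P).trans hPQ) P₀
      _ = P₀ := mul_one P₀
  refine le_antisymm (s.star_mono _ _ hP₀_ne hP hP₀) ?_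
  calc s.star P = s.star (P * s.star 1) := by rw [s.star_mul_star hP one_ne_bot, mul_one]
    _ = s.star (P * (P₀ * Q₀)) := by rw [← h, s.star_mul_star hP hPQ₀]
    _ ≤ s.star P₀ := s.star_mono _ _ (mul_ne_bot hP hPQ₀) hP₀_ne hle

theorem star_le_starF (hFE : F ≤ E) (hF : F ≠ ⊥) (hfg : F.FG) : s.star F ≤ starF s E :=
  le_iSup₂_of_le F ⟨hFE, hF, hfg⟩ le_rfl

theorem starF_le_star (hE : E ≠ ⊥) : starF s E ≤ s.star E :=
  iSup₂_le fun _ hF => s.star_mono _ _ hF.2.1 hE hF.1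

theorem starF_mono (h : E ≤ F) : starF s E ≤ starF s F :=
  iSup₂_le fun _ hG => s.star_le_starF (hG.1.trans h) hG.2.1 hG.2.2

theorem starF_bot : starF s ⊥ = ⊥ :=
  eq_bot_iff.2 <| iSup₂_le fun _ hF => absurd (le_bot_iff.1 hF.1) hF.2.1

theorem one_mem_starF_one : (1 : K) ∈ starF s 1 :=
  s.star_le_starF le_rfl one_ne_bot ⟨{1}, by simp [one_eq_span]⟩
    (s.le_star 1 one_ne_bot (one_le.1 le_rfl))

theorem exists_fg_of_mem_starF {x : K} (hx : x ∈ starF s E) (hx0 : x ≠ 0) :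
    ∃ F ≤ E, F ≠ ⊥ ∧ F.FG ∧ x ∈ s.star F := by
  have hE : E ≠ ⊥ := by
    rintro rfl
    exact hx0 ((mem_bot R).1 (s.starF_bot ▸ hx))
  obtain ⟨a, ha, ha0⟩ := (Submodule.ne_bot_iff E).1 hE
  have : Nonempty {F : Submodule R K // F ≤ E ∧ F ≠ ⊥ ∧ F.FG} :=
    ⟨⟨span R {a}, (span_singleton_le_iff_mem a E).2 ha,
      mt span_singleton_eq_bot.1 ha0, fg_span_singleton a⟩⟩
  have hdir : Directed (· ≤ ·) fun F : {F : Submodule R K // F ≤ E ∧ F ≠ ⊥ ∧ F.FG} =>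
      s.star F.1 := by
    rintro ⟨F₁, hF₁E, hF₁, hF₁fg⟩ ⟨F₂, hF₂E, hF₂, hF₂fg⟩
    have hsup : F₁ ⊔ F₂ ≠ ⊥ := ne_bot_of_le_ne_bot hF₁ le_sup_left
    exact ⟨⟨F₁ ⊔ F₂, sup_le hF₁E hF₂E, hsup, hF₁fg.sup hF₂fg⟩,
      s.star_mono _ _ hF₁ hsup le_sup_left, s.star_mono _ _ hF₂ hsup le_sup_right⟩
  rw [starF, iSup_subtype', mem_iSup_of_directed _ hdir] at hx
  obtain ⟨⟨F, hFE, hF, hfg⟩, hxF⟩ := hx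
  exact ⟨F, hFE, hF, hfg, hxF⟩

theorem exists_fg_star_mul_eq_of_starF_mul_eq (hPQ : P * Q ≤ 1)
    (h : starF s (P * Q) = starF s 1) :
    ∃ P₀ Q₀ : Submodule R K, P₀ ≤ P ∧ Q₀ ≤ Q ∧ P₀ ≠ ⊥ ∧ Q₀ ≠ ⊥ ∧ P₀.FG ∧ Q₀.FG ∧
      s.star (P₀ * Q₀) = s.star 1 := by
  obtain ⟨F, hFPQ, hF, hFfg, h1F⟩ :=
    s.exists_fg_of_mem_starF (h ▸ s.one_mem_starF_one) one_ne_zero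
  obtain ⟨P₀, Q₀, hP₀, hQ₀, hP₀fg, hQ₀fg, hFle⟩ := hFfg.exists_fg_le_mul hFPQ
  have hPQ₀ : P₀ * Q₀ ≠ ⊥ := ne_bot_of_le_ne_bot hF hFle
  refine ⟨P₀, Q₀, hP₀, hQ₀, ?_, ?_, hP₀fg, hQ₀fg, s.star_eq_star_one hPQ₀
    ((mul_le_mul' hP₀ hQ₀).trans hPQ) (s.star_mono _ _ hF hPQ₀ hFle h1F)⟩
  · rintro rfl
    exact hPQ₀ (bot_mul Q₀)
  · rintro rfl
    exact hPQ₀ (mul_bot P₀)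

theorem starF_eq_starF_one_of_fg (hE : E ≤ 1) (hFE : F ≤ E) (hF : F ≠ ⊥) (hfg : F.FG)
    (h : s.star F = s.star 1) : starF s E = starF s 1 := by
  refine le_antisymm (s.starF_mono hE) ?_
  calc starF s 1 ≤ s.star 1 := s.starF_le_star one_ne_bot
    _ = s.star F := h.symm
    _ ≤ starF s E := s.star_le_starF hFE hF hfg

end SemistarOperation

theorem stmt7_general (s : SemistarOperation D K) (I : Submodule D K) :
    (starF s (I * ((1 : Submodule D K) / I)) = starF s 1 ↔
      ∃ I' I'' : Submodule D K, I' ≤ I ∧ I'' ≤ (1 : Submodule D K) / I ∧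
        I' ≠ ⊥ ∧ I'' ≠ ⊥ ∧ I'.FG ∧ I''.FG ∧ s.star (I' * I'') = s.star 1) ∧
    (∀ I' I'' : Submodule D K, I' ≤ I → I'' ≤ (1 : Submodule D K) / I →
      I' ≠ ⊥ → I'' ≠ ⊥ → I'.FG → I''.FG → s.star (I' * I'') = s.star 1 →
      s.star I' = s.star I ∧ s.star I'' = s.star ((1 : Submodule D K) / I)) := by
  have hle : I * (1 / I) ≤ 1 := mul_one_div_le_one
  refine ⟨⟨s.exists_fg_star_mul_eq_of_starF_mul_eq hle, ?_⟩, ?_⟩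
  · rintro ⟨I', I'', hI', hI'', hne', hne'', hfg', hfg'', h⟩
    exact s.starF_eq_starF_one_of_fg hle (mul_le_mul' hI' hI'') (mul_ne_bot hne' hne'')
      (hfg'.mul hfg'') h
  · intro I' I'' hI' hI'' hne' hne'' _ _ h
    exact ⟨s.star_eq_of_mul_le_one hle hI' hI'' hne' hne'' h,
      s.star_eq_of_mul_le_one (mul_comm I _ ▸ hle) hI'' hI' hne'' hne' (mul_comm I' I'' ▸ h)⟩

theorem stmt7 (s : SemistarOperation D K) (I : Submodule D K) (hI : IsFracIdeal I) :
    (starF s (I * ((1 : Submodule D K) / I)) = starF s 1 ↔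
      ∃ I' I'' : Submodule D K, I' ≤ I ∧ I'' ≤ (1 : Submodule D K) / I ∧
        I' ≠ ⊥ ∧ I'' ≠ ⊥ ∧ I'.FG ∧ I''.FG ∧ s.star (I' * I'') = s.star 1) ∧
    (∀ I' I'' : Submodule D K, I' ≤ I → I'' ≤ (1 : Submodule D K) / I →
      I' ≠ ⊥ → I'' ≠ ⊥ → I'.FG → I''.FG → s.star (I' * I'') = s.star 1 →
      s.star I' = s.star I ∧ s.star I'' = s.star ((1 : Submodule D K) / I)) :=
  stmt7_general s I
end

section
/- Let ⋆ be a semistar operation on an integral domain D and let I be a nonzero fractional ideal of D. If I is ⋆-invertible, then I^⋆ is ⋆_ι-invertible as a fractional ideal of the overring D^⋆, where ⋆_ι is the (semi)star operation induced on D^⋆ by ⋆ (i.e., (I^⋆ (D^⋆ : I^⋆))^⋆ = D^⋆). -/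
open Submodule

variable {R K : Type*} [CommRing R] [Field K] [Algebra R K]

variable {D K : Type*} [CommRing D] [IsDomain D] [Field K] [Algebra D K] [IsFractionRing D K]

theorem stmt11 (s : SemistarOperation D K) (I : Submodule D K)
    (hI : IsFracIdeal I) (h : IsStarInv s I) :
    s.star (s.star I * (s.star 1 / s.star I)) = s.star 1 := by
  obtain ⟨hIbot, d, hd0, hdI⟩ := hI
  have h1bot : (1 : Submodule D K) ≠ ⊥ := by
    intro hc
    have : (1 : K) ∈ (1 : Submodule D K) := Submodule.one_le.mp le_rfl
    rw [hc] at this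
    simp at this
  have hstar1bot : s.star 1 ≠ ⊥ := by
    intro hc
    have := s.le_star 1 h1bot
    rw [hc, le_bot_iff] at this
    exact h1bot this
  have hstarIbot : s.star I ≠ ⊥ := by
    intro hc
    have := s.le_star I hIbot
    rw [hc, le_bot_iff] at this
    exact hIbot this
  obtain ⟨x0, hx0I, hx00⟩ := Submodule.exists_mem_ne_zero_of_ne_bot hIbot
  have hdK : algebraMap D K d ≠ 0 := by
    simpa using (map_ne_zero_iff _ (IsFractionRing.injective D K)).mpr hd0
  have hdmem : algebraMap D K d ∈ (1 : Submodule D K) / I :=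
    Submodule.mem_div_iff_forall_mul_mem.mpr fun y hy => hdI y hy
  -- key inclusion: 1/I ≤ s.star 1 / s.star I
  have hle : (1 : Submodule D K) / I ≤ s.star 1 / s.star I := by
    intro x hx
    rw [Submodule.mem_div_iff_forall_mul_mem] at hx ⊢
    intro y hy
    by_cases hx0 : x = 0
    · rw [hx0, zero_mul]; exact (s.star 1).zero_mem
    · have hmap : (s.star I).map (LinearMap.mul D K x) = s.star (I.map (LinearMap.mul D K x)) :=
        (s.star_smul x hx0 I hIbot).symm
      have hmem : x * y ∈ (s.star I).map (LinearMap.mul D K x) :=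
        ⟨y, hy, rfl⟩
      rw [hmap] at hmem
      have hIxbot : I.map (LinearMap.mul D K x) ≠ ⊥ := by
        intro hc
        have : x * x0 ∈ I.map (LinearMap.mul D K x) := ⟨x0, hx0I, rfl⟩
        rw [hc, Submodule.mem_bot] at this
        exact hx0 (by rcases mul_eq_zero.mp this with h' | h'; exact h'; exact absurd h' hx00)
      have hIxle : I.map (LinearMap.mul D K x) ≤ (1 : Submodule D K) := by
        rintro _ ⟨z, hz, rfl⟩
        exact hx z hz
      exact s.star_mono _ _ hIxbot h1bot hIxle hmem
  have hEF : I * ((1 : Submodule D K) / I) ≤ s.star I * (s.star 1 / s.star I) :=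
    mul_le_mul' (s.le_star I hIbot) hle
  have hEbot : I * ((1 : Submodule D K) / I) ≠ ⊥ := by
    intro hc
    have : x0 * algebraMap D K d ∈ I * ((1 : Submodule D K) / I) :=
      Submodule.mul_mem_mul hx0I hdmem
    rw [hc, Submodule.mem_bot] at this
    rcases mul_eq_zero.mp this with h' | h'
    · exact hx00 h'
    · exact hdK h'
  have hFbot : s.star I * (s.star 1 / s.star I) ≠ ⊥ := by
    intro hc
    exact hEbot (le_bot_iff.mp (hc ▸ hEF))
  have hFle : s.star I * (s.star 1 / s.star I) ≤ s.star 1 :=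
    Submodule.mul_le.mpr fun m hm n hn => by
      rw [mul_comm]
      exact Submodule.mem_div_iff_forall_mul_mem.mp hn m hm
  refine le_antisymm ?_ ?_
  · have := s.star_mono _ _ hFbot hstar1bot hFle
    rwa [s.star_idem 1 h1bot] at this
  · have := s.star_mono _ _ hEbot hFbot hEF
    rwa [h] at this
end

section
/- Let D be an integral domain, T an overring of D, and ⋆ a semistar operation on D. Then the map ⋆_ι defined on nonzero T-submodules E of K by E^{⋆_ι} := E^⋆ is a semistar operation on T; if ⋆ is of finite type, so is ⋆_ι; if T = D^⋆, then ⋆_ι is a (semi)star operation on D^⋆ (i.e., (D^⋆)^{⋆_ι} = D^⋆); and if ⋆ is stable, so is ⋆_ι. -/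
open Submodule

variable {R K : Type*} [CommRing R] [Field K] [Algebra R K]

/-!
A nonzero `T`-submodule `E` of `K` is in particular a `D`-submodule, and `E^⋆` is again a
`T`-submodule: for `t ∈ T` nonzero, `t E^⋆ = (t E)^⋆ ⊆ E^⋆` because `t E ⊆ E`. The axioms of a
semistar operation and stability then transfer verbatim. For finite type, a finitely generated
`D`-submodule `F ⊆ E` gives the finitely generated `T`-submodule `T F ⊆ E` with `F^⋆ ⊆ (T F)^⋆`.
-/

namespace Submodule

theorem one_ne_bot_s12 {A B : Type*} [CommSemiring A] [Semiring B] [Nontrivial B] [Algebra A B] :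
    (1 : Submodule A B) ≠ ⊥ :=
  fun h => one_ne_zero ((mem_bot A).1 (h ▸ one_le.1 le_rfl))

theorem map_mul_ne_bot {A B : Type*} [CommSemiring A] [Ring B] [NoZeroDivisors B] [Algebra A B]
    {E : Submodule A B} (hE : E ≠ ⊥) {x : B} (hx : x ≠ 0) : E.map (LinearMap.mul A B x) ≠ ⊥ := by
  have hinj : Function.Injective (LinearMap.mul A B x) := mul_right_injective₀ hx
  simpa using (map_injective_of_injective hinj).ne hE

theorem restrictScalars_ne_bot {A B M : Type*} [Semiring A] [Semiring B] [AddCommMonoid M]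
    [Module A M] [Module B M] [SMul A B] [IsScalarTower A B M] {E : Submodule B M} (hE : E ≠ ⊥) :
    E.restrictScalars A ≠ ⊥ :=
  mt (restrictScalars_eq_bot_iff A B M).mp hE

end Submodule

theorem Subalgebra.toSubmodule_eq_restrictScalars_one {A B : Type*} [CommSemiring A]
    [CommSemiring B] [Algebra A B] (T : Subalgebra A B) :
    Subalgebra.toSubmodule T = (1 : Submodule T B).restrictScalars A := by
  ext x
  simp

namespace SemistarOperation

section Induced

variable {S : Type*} [CommRing S] [Algebra R S] [Algebra S K] [IsScalarTower R S K]
  (s : SemistarOperation R K)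

theorem starF_le {E : Submodule R K} (hE : E ≠ ⊥) : starF s E ≤ s.star E :=
  iSup₂_le fun F hF => s.star_mono F E hF.2.1 hE hF.1

theorem smul_mem_star_restrictScalars {E : Submodule S K} (hE : E ≠ ⊥) (t : S) {x : K}
    (hx : x ∈ s.star (E.restrictScalars R)) : t • x ∈ s.star (E.restrictScalars R) := by
  set a := algebraMap S K t
  rw [Algebra.smul_def]
  by_cases ha : a = 0
  · simp [a, ha]
  have hE' := restrictScalars_ne_bot (A := R) hE
  have hmul : (E.restrictScalars R).map (LinearMap.mul R K a) ≤ E.restrictScalars R := by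
    rintro _ ⟨y, hy, rfl⟩
    simpa [a, Algebra.smul_def] using E.smul_mem t hy
  apply s.star_mono _ _ (map_mul_ne_bot hE' ha) hE' hmul
  rw [s.star_smul a ha _ hE']
  exact mem_map_of_mem hx

-- `s.star ⊥` is unconstrained, so it need not be an `S`-submodule.
variable (S) in
noncomputable def inducedStar (E : Submodule S K) : Submodule S K :=
  if hE : E = ⊥ then ⊥ else
    { toAddSubmonoid := (s.star (E.restrictScalars R)).toAddSubmonoid
      smul_mem' := fun t _ hx => smul_mem_star_restrictScalars s hE t hx }

theorem restrictScalars_inducedStar {E : Submodule S K} (hE : E ≠ ⊥) :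
    (inducedStar S s E).restrictScalars R = s.star (E.restrictScalars R) := by
  rw [inducedStar, dif_neg hE]
  rfl

variable (S) in
noncomputable def induced : SemistarOperation S K where
  star := inducedStar S s
  star_smul x hx E hE := by
    apply restrictScalars_injective R S K
    rw [restrictScalars_inducedStar s (map_mul_ne_bot hE hx), restrictScalars_map,
      restrictScalars_map, restrictScalars_inducedStar s hE, LinearMap.restrictScalars_mul]
    exact s.star_smul x hx _ (restrictScalars_ne_bot hE)
  star_mono E F hE hF hEF := by
    rw [← restrictScalars_le R, restrictScalars_inducedStar s hE, restrictScalars_inducedStar s hF]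
    exact s.star_mono _ _ (restrictScalars_ne_bot hE) (restrictScalars_ne_bot hF) hEF
  le_star E hE := by
    rw [← restrictScalars_le R, restrictScalars_inducedStar s hE]
    exact s.le_star _ (restrictScalars_ne_bot hE)
  star_idem E hE := by
    have hE' := restrictScalars_ne_bot (A := R) hE
    have hstar : inducedStar S s E ≠ ⊥ := fun h => hE' <| eq_bot_iff.2 <| by
      simpa [h, ← restrictScalars_inducedStar s hE] using s.le_star _ hE'
    apply restrictScalars_injective R S K
    rw [restrictScalars_inducedStar s hstar, restrictScalars_inducedStar s hE]
    exact s.star_idem _ hE'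

theorem restrictScalars_induced_star {E : Submodule S K} (hE : E ≠ ⊥) :
    ((s.induced S).star E).restrictScalars R = s.star (E.restrictScalars R) :=
  restrictScalars_inducedStar s hE

theorem starF_restrictScalars_le (E : Submodule S K) :
    starF s (E.restrictScalars R) ≤ (starF (s.induced S) E).restrictScalars R := by
  refine iSup₂_le fun F ⟨hFE, hF, hFfg⟩ => ?_
  have hFG : F ≤ (span S (F : Set K)).restrictScalars R := subset_span
  have hG : span S (F : Set K) ≠ ⊥ := fun h => hF (eq_bot_iff.2 (by simpa [h] using hFG))
  calc s.star F ≤ s.star ((span S (F : Set K)).restrictScalars R) :=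
        s.star_mono _ _ hF (restrictScalars_ne_bot hG) hFG
    _ = ((s.induced S).star (span S (F : Set K))).restrictScalars R :=
        (restrictScalars_induced_star s hG).symm
    _ ≤ (starF (s.induced S) E).restrictScalars R :=
        restrictScalars_mono R <|
          le_iSup₂_of_le (span S (F : Set K)) ⟨span_le.2 hFE, hG, hFfg.span⟩ le_rfl

theorem isFiniteTypeOp_induced (h : IsFiniteTypeOp s) : IsFiniteTypeOp (s.induced S) := by
  intro E hE
  refine le_antisymm ?_ (starF_le _ hE)
  rw [← restrictScalars_le R, restrictScalars_induced_star s hE, h _ (restrictScalars_ne_bot hE)]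
  exact starF_restrictScalars_le s E

theorem isStableOp_induced (h : IsStableOp s) : IsStableOp (s.induced S) := by
  intro E F hE hF hEF
  apply restrictScalars_injective R S K
  rw [restrictScalars_inf, restrictScalars_induced_star s hEF, restrictScalars_induced_star s hE,
    restrictScalars_induced_star s hF, restrictScalars_inf]
  refine h _ _ (restrictScalars_ne_bot hE) (restrictScalars_ne_bot hF) ?_
  simpa using restrictScalars_ne_bot (A := R) hEF

theorem induced_star_one (h : (1 : Submodule S K).restrictScalars R = s.star 1) :
    (s.induced S).star 1 = 1 := by
  apply restrictScalars_injective R S K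
  rw [restrictScalars_induced_star s one_ne_bot_s12, h, s.star_idem 1 one_ne_bot_s12]

end Induced

end SemistarOperation

variable {D K : Type*} [CommRing D] [IsDomain D] [Field K] [Algebra D K] [IsFractionRing D K]

theorem stmt12 (T : Subalgebra D K) (s : SemistarOperation D K) :
    ∃ sι : SemistarOperation (↥T) K,
      (∀ E : Submodule (↥T) K, E ≠ ⊥ →
        Submodule.restrictScalars D (sι.star E) = s.star (Submodule.restrictScalars D E)) ∧
      (IsFiniteTypeOp s → IsFiniteTypeOp sι) ∧
      (Subalgebra.toSubmodule T = s.star 1 → sι.star 1 = 1) ∧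
      (IsStableOp s → IsStableOp sι) :=
  ⟨s.induced T, fun _ => s.restrictScalars_induced_star, s.isFiniteTypeOp_induced,
    fun hT => s.induced_star_one (T.toSubmodule_eq_restrictScalars_one ▸ hT),
    s.isStableOp_induced⟩
end

section
/- Let ⋆ be a semistar operation on an integral domain D and let I be a quasi-⋆-invertible fractional ideal of D. Then I is ⋆-invertible if and only if (D:I)^⋆ = (D^⋆ : I). -/
open Submodule

variable {R K : Type*} [CommRing R] [Field K] [Algebra R K]

variable {D K : Type*} [CommRing D] [IsDomain D] [Field K] [Algebra D K] [IsFractionRing D K]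

lemma aux_prod_ne_bot {E F : Submodule D K} (hE : E ≠ ⊥) (hF : F ≠ ⊥) : E * F ≠ ⊥ := by
  obtain ⟨e, he, he0⟩ := Submodule.ne_bot_iff E |>.mp hE
  obtain ⟨f, hf, hf0⟩ := Submodule.ne_bot_iff F |>.mp hF
  exact Submodule.ne_bot_iff _ |>.mpr ⟨e * f, Submodule.mul_mem_mul he hf, mul_ne_zero he0 hf0⟩

lemma aux_map_ne_bot {x : K} (hx : x ≠ 0) {E : Submodule D K} (hE : E ≠ ⊥) :
    E.map (LinearMap.mul D K x) ≠ ⊥ := by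
  obtain ⟨e, he, he0⟩ := Submodule.ne_bot_iff E |>.mp hE
  exact Submodule.ne_bot_iff _ |>.mpr ⟨x * e, ⟨e, he, rfl⟩, mul_ne_zero hx he0⟩

lemma aux_star_ne_bot (s : SemistarOperation D K) {E : Submodule D K} (hE : E ≠ ⊥) :
    s.star E ≠ ⊥ := by
  obtain ⟨e, he, he0⟩ := Submodule.ne_bot_iff E |>.mp hE
  exact Submodule.ne_bot_iff _ |>.mpr ⟨e, s.le_star E hE he, he0⟩

lemma aux_mul_star_le (s : SemistarOperation D K) {E F : Submodule D K}
    (hE : E ≠ ⊥) (hF : F ≠ ⊥) : E * s.star F ≤ s.star (E * F) := by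
  rw [Submodule.mul_le]
  intro e he y hy
  by_cases he0 : e = 0
  · simpa [he0] using (s.star (E * F)).zero_mem
  · have h1 : F.map (LinearMap.mul D K e) ≤ E * F := by
      rintro _ ⟨f, hf, rfl⟩
      exact Submodule.mul_mem_mul he hf
    have h2 : e * y ∈ (s.star F).map (LinearMap.mul D K e) := ⟨y, hy, rfl⟩
    rw [← s.star_smul e he0 F hF] at h2
    exact s.star_mono _ _ (aux_map_ne_bot he0 hF) (aux_prod_ne_bot hE hF) h1 h2

lemma aux_map_mul_le {x : K} {E F : Submodule D K} :
    (E * F).map (LinearMap.mul D K x) ≤ (E.map (LinearMap.mul D K x)) * F := by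
  rw [Submodule.map_le_iff_le_comap, Submodule.mul_le]
  intro e he f hf
  rw [Submodule.mem_comap]
  have : x * (e * f) = (x * e) * f := by ring
  rw [LinearMap.mul_apply', this]
  exact Submodule.mul_mem_mul ⟨e, he, rfl⟩ hf

theorem stmt14 (s : SemistarOperation D K) (I : Submodule D K)
    (hI : IsFracIdeal I) (hq : IsQuasiStarInv s I) :
    IsStarInv s I ↔ s.star ((1 : Submodule D K) / I) = s.star 1 / I := by
  obtain ⟨hIbot, d, hd, hdI⟩ := hI
  have h1 : (1 : Submodule D K) ≠ ⊥ :=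
    Submodule.ne_bot_iff _ |>.mpr ⟨1, Submodule.one_le.mp le_rfl, one_ne_zero⟩
  have hinv : (1 : Submodule D K) / I ≠ ⊥ := by
    refine Submodule.ne_bot_iff _ |>.mpr ⟨algebraMap D K d, ?_, ?_⟩
    · rw [Submodule.mem_div_iff_forall_mul_mem]
      intro y hy
      exact hdI y hy
    · simpa using (IsFractionRing.injective D K).ne_iff.mpr hd
  have hprod : I * ((1 : Submodule D K) / I) ≠ ⊥ := aux_prod_ne_bot hIbot hinv
  have hle1 : I * ((1 : Submodule D K) / I) ≤ 1 := by
    rw [Submodule.mul_le]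
    intro i hi y hy
    rw [Submodule.mem_div_iff_forall_mul_mem] at hy
    rw [mul_comm]
    exact hy i hi
  constructor
  · intro h
    apply le_antisymm
    · intro x hx
      rw [Submodule.mem_div_iff_forall_mul_mem]
      intro i hi
      have hmem : x * i ∈ s.star ((1 : Submodule D K) / I) * I := Submodule.mul_mem_mul hx hi
      have h2 : s.star ((1 : Submodule D K) / I) * I ≤ s.star 1 := by
        rw [mul_comm]
        exact le_of_le_of_eq (aux_mul_star_le s hIbot hinv) h
      exact h2 hmem
    · intro x hx
      by_cases hx0 : x = 0
      · simp [hx0]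
      · rw [Submodule.mem_div_iff_forall_mul_mem] at hx
        have h1mem : (1 : K) ∈ s.star (I * ((1 : Submodule D K) / I)) := by
          rw [h]
          exact s.le_star 1 h1 (Submodule.one_le.mp le_rfl)
        have hxmem : x ∈ (s.star (I * ((1 : Submodule D K) / I))).map (LinearMap.mul D K x) :=
          ⟨1, h1mem, by simp⟩
        rw [← s.star_smul x hx0 _ hprod] at hxmem
        have hmaple : (I * ((1 : Submodule D K) / I)).map (LinearMap.mul D K x) ≤
            s.star ((1 : Submodule D K) / I) := by
          refine le_trans aux_map_mul_le ?_
          have hI1 : I.map (LinearMap.mul D K x) ≤ s.star 1 := by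
            rintro _ ⟨i, hi, rfl⟩
            exact hx i hi
          calc I.map (LinearMap.mul D K x) * ((1 : Submodule D K) / I)
              ≤ s.star 1 * ((1 : Submodule D K) / I) := mul_le_mul' hI1 le_rfl
            _ = ((1 : Submodule D K) / I) * s.star 1 := mul_comm _ _
            _ ≤ s.star (((1 : Submodule D K) / I) * 1) := aux_mul_star_le s hinv h1
            _ = s.star ((1 : Submodule D K) / I) := by rw [mul_one]
        have := s.star_mono _ _ (aux_map_ne_bot hx0 hprod) (aux_star_ne_bot s hinv) hmaple
        rw [s.star_idem _ hinv] at this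
        exact this hxmem
  · intro h
    unfold IsStarInv
    apply le_antisymm
    · exact s.star_mono _ _ hprod h1 hle1
    · have hq' : s.star (I * s.star ((1 : Submodule D K) / I)) = s.star 1 := by
        rw [h]; exact hq
      have hle : I * s.star ((1 : Submodule D K) / I) ≤ s.star (I * ((1 : Submodule D K) / I)) :=
        aux_mul_star_le s hIbot hinv
      have hne : I * s.star ((1 : Submodule D K) / I) ≠ ⊥ :=
        aux_prod_ne_bot hIbot (aux_star_ne_bot s hinv)
      calc s.star 1 = s.star (I * s.star ((1 : Submodule D K) / I)) := hq'.symm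
        _ ≤ s.star (s.star (I * ((1 : Submodule D K) / I))) :=
            s.star_mono _ _ hne (aux_star_ne_bot s hprod) hle
        _ = s.star (I * ((1 : Submodule D K) / I)) := s.star_idem _ hprod
end

section
/- Let ⋆ be a semistar operation of finite type on an integral domain D and let I be a nonzero finitely generated fractional ideal of D. Then I is ⋆-invertible if and only if I D_Q is an invertible (equivalently, principal) ideal of the localization D_Q for every quasi-⋆-maximal ideal Q of D. -/
open Submodule

variable {R K : Type*} [CommRing R] [Field K] [Algebra R K]

variable {D K : Type*} [CommRing D] [IsDomain D] [Field K] [Algebra D K] [IsFractionRing D K]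
section Aux
set_option linter.unusedSectionVars false
variable {D K : Type*} [CommRing D] [IsDomain D] [Field K] [Algebra D K] [IsFractionRing D K]

lemma alg_inj : Function.Injective (Algebra.linearMap D K) :=
  IsFractionRing.injective D K

lemma map_ne_bot {J : Ideal D} (h : J ≠ ⊥) :
    Submodule.map (Algebra.linearMap D K) J ≠ ⊥ := by
  intro hb
  apply h
  rw [← Submodule.comap_map_eq_of_injective (alg_inj (K := K)) J, hb, Submodule.comap_bot]
  exact LinearMap.ker_eq_bot.mpr alg_inj

lemma map_le_one (J : Ideal D) :
    Submodule.map (Algebra.linearMap D K) J ≤ (1 : Submodule D K) := by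
  rintro x ⟨y, -, rfl⟩
  rw [Submodule.one_eq_range]
  exact ⟨y, rfl⟩

lemma one_mem_locAt {Q : Ideal D} (hQ : Q ≠ ⊤) : (1 : K) ∈ locAt (K := K) Q := by
  apply Submodule.subset_span
  exact ⟨1, fun h => hQ (Ideal.eq_top_of_isUnit_mem _ h isUnit_one), by simp⟩

lemma one_le_locAt {Q : Ideal D} (hQ : Q ≠ ⊤) : (1 : Submodule D K) ≤ locAt Q := by
  rw [Submodule.one_eq_range]
  rintro x ⟨y, rfl⟩
  have : (Algebra.linearMap D K) y = y • (1 : K) := by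
    simp [Algebra.smul_def]
  rw [this]
  exact Submodule.smul_mem _ _ (one_mem_locAt hQ)

lemma inv_mem_locAt {Q : Ideal D} {t : D} (ht : t ∉ Q) :
    (algebraMap D K t)⁻¹ ∈ locAt (K := K) Q := by
  have ht0 : t ≠ 0 := fun h => ht (h ▸ Q.zero_mem)
  have : algebraMap D K t ≠ 0 := fun h => ht0 (alg_inj (K := K) (by simpa using h))
  exact Submodule.subset_span ⟨t, ht, inv_mul_cancel₀ this⟩

lemma exists_denom_of_mem_locAt {Q : Ideal D}
    (hmul : ∀ a b : D, a ∉ Q → b ∉ Q → a * b ∉ Q) (hQ : Q ≠ ⊤) {x : K}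
    (hx : x ∈ locAt (K := K) Q) :
    ∃ s : D, s ∉ Q ∧ algebraMap D K s * x ∈ (1 : Submodule D K) := by
  induction hx using Submodule.span_induction with
  | mem y hy =>
    obtain ⟨s, hs, hys⟩ := hy
    exact ⟨s, hs, by rw [mul_comm, hys]; exact Submodule.one_le.mp le_rfl⟩
  | zero => exact ⟨1, fun h => hQ (Ideal.eq_top_of_isUnit_mem _ h isUnit_one), by simp⟩
  | add y z _ _ hy hz =>
    obtain ⟨s, hs, hy1⟩ := hy
    obtain ⟨t, ht, hz1⟩ := hz
    refine ⟨s * t, hmul s t hs ht, ?_⟩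
    rw [map_mul, mul_add]
    have h1 : algebraMap D K s * algebraMap D K t * y
        = t • (algebraMap D K s * y) := by rw [Algebra.smul_def]; ring
    have h2 : algebraMap D K s * algebraMap D K t * z
        = s • (algebraMap D K t * z) := by rw [Algebra.smul_def]; ring
    rw [h1, h2]
    exact Submodule.add_mem _ (Submodule.smul_mem _ _ hy1) (Submodule.smul_mem _ _ hz1)
  | smul c y _ hy =>
    obtain ⟨s, hs, hy1⟩ := hy
    refine ⟨s, hs, ?_⟩
    have : algebraMap D K s * c • y = c • (algebraMap D K s * y) := by
      rw [Algebra.smul_def, Algebra.smul_def]; ring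
    rw [this]
    exact Submodule.smul_mem _ _ hy1

lemma locAt_mul_self {Q : Ideal D}
    (hmul : ∀ a b : D, a ∉ Q → b ∉ Q → a * b ∉ Q) :
    locAt (K := K) Q * locAt Q ≤ locAt Q := by
  rw [locAt, Submodule.span_mul_span]
  apply Submodule.span_le.2
  rintro _ ⟨x, ⟨sx, hsx, hx⟩, y, ⟨sy, hsy, hy⟩, rfl⟩
  apply Submodule.subset_span
  refine ⟨sx * sy, hmul _ _ hsx hsy, ?_⟩
  rw [map_mul]
  calc x * y * (algebraMap D K sx * algebraMap D K sy)
      = (x * algebraMap D K sx) * (y * algebraMap D K sy) := by ring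
    _ = 1 := by rw [hx, hy, mul_one]

end Aux
section Aux2
set_option linter.unusedSectionVars false
variable {D K : Type*} [CommRing D] [IsDomain D] [Field K] [Algebra D K] [IsFractionRing D K]

lemma quasi_closure (s : SemistarOperation D K) {A : Ideal D} (hA : A ≠ ⊥) :
    QuasiStarIdeal s.star
      ((s.star (Submodule.map (Algebra.linearMap D K) A)).comap (Algebra.linearMap D K)) ∧
    A ≤ (s.star (Submodule.map (Algebra.linearMap D K) A)).comap (Algebra.linearMap D K) := by
  set M := Submodule.map (Algebra.linearMap D K) A with hM
  have hMbot : M ≠ ⊥ := map_ne_bot hA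
  set A' : Ideal D := (s.star M).comap (Algebra.linearMap D K) with hA'
  have hAA' : A ≤ A' := fun a ha => s.le_star M hMbot ⟨a, ha, rfl⟩
  have hA'bot : A' ≠ ⊥ := fun h => hA (le_bot_iff.mp (h ▸ hAA'))
  have hmapA' : Submodule.map (Algebra.linearMap D K) A' ≤ s.star M := by
    rintro _ ⟨y, hy, rfl⟩; exact hy
  have hmapA'bot : Submodule.map (Algebra.linearMap D K) A' ≠ ⊥ := map_ne_bot hA'bot
  have hstarMbot : s.star M ≠ ⊥ := fun h => hMbot (le_bot_iff.mp (h ▸ s.le_star M hMbot))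
  refine ⟨⟨hA'bot, ?_⟩, hAA'⟩
  apply le_antisymm
  · intro a ha
    have : (Algebra.linearMap D K) a ∈ s.star (s.star M) :=
      s.star_mono _ _ hmapA'bot hstarMbot hmapA' ha
    rwa [s.star_idem M hMbot] at this
  · intro a ha
    exact s.le_star _ hmapA'bot ⟨a, ha, rfl⟩

lemma quasiStarMax_mul_notMem (s : SemistarOperation D K) {Q : Ideal D}
    (hQ : QuasiStarMax s.star Q) : ∀ a b : D, a ∉ Q → b ∉ Q → a * b ∉ Q := by
  intro a b ha hb hab
  have ha0 : a ≠ 0 := fun h => ha (h ▸ Q.zero_mem)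
  have hb0 : b ≠ 0 := fun h => hb (h ▸ Q.zero_mem)
  set J : Ideal D := Q ⊔ Ideal.span {a} with hJ
  have hJbot : J ≠ ⊥ := fun h => hQ.1.1 (le_bot_iff.mp (h ▸ (le_sup_left : Q ≤ J)))
  obtain ⟨hqsi, hle⟩ := quasi_closure (K := K) s hJbot
  set A' : Ideal D := (s.star (Submodule.map (Algebra.linearMap D K) J)).comap
    (Algebra.linearMap D K) with hA'
  have haA' : a ∈ A' := hle (le_sup_right (α := Ideal D) (Ideal.subset_span rfl))
  have hA'top : A' = ⊤ := by
    by_contra hne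
    have := hQ.2.2 A' hqsi hne (le_trans le_sup_left hle)
    exact ha (this ▸ haA')
  have h1 : (1 : K) ∈ s.star (Submodule.map (Algebra.linearMap D K) J) := by
    have h1' : (1 : D) ∈ A' := hA'top ▸ trivial
    rw [hA'] at h1'
    have := Submodule.mem_comap.mp h1'
    simpa using this
  set bK : K := algebraMap D K b with hbK
  have hbK0 : bK ≠ 0 := by
    intro h
    apply hb0
    apply alg_inj (K := K)
    simp only [Algebra.linearMap_apply, map_zero]
    exact h
  have hMJbot : Submodule.map (Algebra.linearMap D K) J ≠ ⊥ := map_ne_bot hJbot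
  -- image of map J under multiplication by bK is ≤ map Q
  have hsub : (Submodule.map (Algebra.linearMap D K) J).map (LinearMap.mul D K bK)
      ≤ Submodule.map (Algebra.linearMap D K) Q := by
    rintro _ ⟨_, ⟨j, hj, rfl⟩, rfl⟩
    obtain ⟨q, hq, r, hr, rfl⟩ := Submodule.mem_sup.mp (hJ ▸ hj : j ∈ Q ⊔ Ideal.span {a})
    obtain ⟨c, rfl⟩ := Ideal.mem_span_singleton'.mp hr
    refine ⟨b * q + c * (a * b), ?_, ?_⟩
    · exact Q.add_mem (Q.mul_mem_left _ hq) (Q.mul_mem_left _ hab)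
    · simp only [LinearMap.mul_apply', Algebra.linearMap_apply, map_add, map_mul]
      ring
  have himgbot : (Submodule.map (Algebra.linearMap D K) J).map (LinearMap.mul D K bK) ≠ ⊥ := by
    rw [Submodule.ne_bot_iff]
    refine ⟨bK * algebraMap D K a, ⟨algebraMap D K a,
      ⟨a, le_sup_right (α := Ideal D) (Ideal.subset_span rfl), rfl⟩, rfl⟩, ?_⟩
    refine mul_ne_zero hbK0 ?_
    intro h
    apply ha0
    apply alg_inj (K := K)
    simp only [Algebra.linearMap_apply, map_zero]
    exact h
  have hbmem : bK ∈ s.star ((Submodule.map (Algebra.linearMap D K) J).map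
      (LinearMap.mul D K bK)) := by
    rw [s.star_smul bK hbK0 _ hMJbot]
    exact ⟨1, h1, by simp [LinearMap.mul_apply']⟩
  have hQbot : Submodule.map (Algebra.linearMap D K) Q ≠ ⊥ := map_ne_bot hQ.1.1
  have : bK ∈ s.star (Submodule.map (Algebra.linearMap D K) Q) :=
    s.star_mono _ _ himgbot hQbot hsub hbmem
  exact hb (hQ.1.2 ▸ this)

end Aux2
section Aux3
set_option linter.unusedSectionVars false
variable {D K : Type*} [CommRing D] [IsDomain D] [Field K] [Algebra D K] [IsFractionRing D K]

lemma mem_starF_exists (s : SemistarOperation D K) {E : Submodule D K} (hE : E ≠ ⊥)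
    {x : K} (hx : x ∈ starF s E) :
    ∃ F : Submodule D K, F ≤ E ∧ F ≠ ⊥ ∧ F.FG ∧ x ∈ s.star F := by
  set p : Submodule D K → Prop := fun F => F ≤ E ∧ F ≠ ⊥ ∧ F.FG with hp
  have hne : Nonempty (Subtype p) := by
    obtain ⟨e, he, he0⟩ := Submodule.ne_bot_iff E |>.mp hE
    refine ⟨⟨Submodule.span D {e}, ?_, ?_, Submodule.fg_span_singleton e⟩⟩
    · exact Submodule.span_le.2 (Set.singleton_subset_iff.2 he)
    · simp [Submodule.span_singleton_eq_bot, he0]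
  have hdir : Directed (· ≤ ·) (fun F : Subtype p => s.star F.1) := by
    rintro ⟨F1, hF1⟩ ⟨F2, hF2⟩
    refine ⟨⟨F1 ⊔ F2, sup_le hF1.1 hF2.1, ?_, hF1.2.2.sup hF2.2.2⟩, ?_, ?_⟩
    · intro h; exact hF1.2.1 (le_bot_iff.mp (h ▸ (le_sup_left : F1 ≤ F1 ⊔ F2)))
    · exact s.star_mono _ _ hF1.2.1
        (fun h => hF1.2.1 (le_bot_iff.mp (h ▸ (le_sup_left : F1 ≤ F1 ⊔ F2)))) le_sup_left
    · exact s.star_mono _ _ hF2.2.1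
        (fun h => hF2.2.1 (le_bot_iff.mp (h ▸ (le_sup_right : F2 ≤ F1 ⊔ F2)))) le_sup_right
  have heq : starF s E = ⨆ F : Subtype p, s.star F.1 := by
    rw [starF, iSup_subtype]
  rw [heq] at hx
  obtain ⟨⟨F, hF⟩, hxF⟩ := (Submodule.mem_iSup_of_directed _ hdir).mp hx
  exact ⟨F, hF.1, hF.2.1, hF.2.2, hxF⟩

lemma exists_quasiStarMax (s : SemistarOperation D K) (hft : IsFiniteTypeOp s)
    {J0 : Ideal D} (h0 : QuasiStarIdeal (K := K) s.star J0) (hTop : J0 ≠ ⊤) :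
    ∃ Q : Ideal D, QuasiStarMax (K := K) s.star Q ∧ J0 ≤ Q := by
  set S : Set (Ideal D) := {J | QuasiStarIdeal (K := K) s.star J ∧ J ≠ ⊤} with hS
  have ih : ∀ c ⊆ S, IsChain (· ≤ ·) c → ∀ y ∈ c, ∃ ub ∈ S, ∀ z ∈ c, z ≤ ub := by
    intro c hcS hchain y hy
    have hcne : c.Nonempty := ⟨y, hy⟩
    have hdirc : DirectedOn (· ≤ ·) c := hchain.directedOn
    set U : Ideal D := sSup c with hU
    have hyU : y ≤ U := le_sSup hy
    have hUbot : U ≠ ⊥ := fun h => (hcS hy).1.1 (le_bot_iff.mp (h ▸ hyU))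
    have hUtop : U ≠ ⊤ := by
      intro h
      have h1 : (1 : D) ∈ U := h ▸ trivial
      obtain ⟨J, hJc, hJ1⟩ := (Submodule.mem_sSup_of_directed hcne hdirc).mp h1
      exact (hcS hJc).2 (Ideal.eq_top_of_isUnit_mem _ hJ1 isUnit_one)
    have hmapUbot : Submodule.map (Algebra.linearMap D K) U ≠ ⊥ := map_ne_bot hUbot
    refine ⟨U, ⟨⟨hUbot, ?_⟩, hUtop⟩, fun z hz => le_sSup hz⟩
    apply le_antisymm
    · intro x hx
      rw [Submodule.mem_comap, hft _ hmapUbot] at hx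
      obtain ⟨F, hFle, hFbot, hFfg, hxF⟩ := mem_starF_exists s hmapUbot hx
      obtain ⟨t, htF⟩ := hFfg
      have hmemmap : ∀ {g : K}, g ∈ Submodule.map (Algebra.linearMap D K) U →
          ∃ J ∈ c, g ∈ Submodule.map (Algebra.linearMap D K) J := by
        intro g hg
        have : Nonempty c := hcne.to_subtype
        rw [hU, sSup_eq_iSup', Submodule.map_iSup] at hg
        have hd : Directed (· ≤ ·) (fun J : c => Submodule.map (Algebra.linearMap D K) J.1) := by
          rintro ⟨J1, h1⟩ ⟨J2, h2⟩
          obtain ⟨J3, h3, h13, h23⟩ := hdirc J1 h1 J2 h2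
          exact ⟨⟨J3, h3⟩, Submodule.map_mono h13, Submodule.map_mono h23⟩
        obtain ⟨⟨J, hJ⟩, hgJ⟩ := (Submodule.mem_iSup_of_directed _ hd).mp hg
        exact ⟨J, hJ, hgJ⟩
      have hcommon : ∀ (u : Finset K), (∀ g ∈ u, (g : K) ∈ Submodule.map (Algebra.linearMap D K) U) →
          ∃ J ∈ c, ∀ g ∈ u, (g : K) ∈ Submodule.map (Algebra.linearMap D K) J := by
        classical
        intro u
        induction u using Finset.induction with
        | empty => exact fun _ => ⟨y, hy, by simp⟩
        | @insert g u' hnm ih2 =>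
          intro hall
          obtain ⟨J2, hJ2c, hJ2⟩ := ih2 (fun a ha => hall a (Finset.mem_insert_of_mem ha))
          obtain ⟨J1, hJ1c, hgJ1⟩ := hmemmap (hall g (Finset.mem_insert_self g u'))
          rcases hchain.total hJ1c hJ2c with h12 | h21
          · refine ⟨J2, hJ2c, fun a ha => ?_⟩
            rcases Finset.mem_insert.mp ha with rfl | ha'
            · exact Submodule.map_mono h12 hgJ1
            · exact hJ2 a ha'
          · refine ⟨J1, hJ1c, fun a ha => ?_⟩
            rcases Finset.mem_insert.mp ha with rfl | ha'
            · exact hgJ1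
            · exact Submodule.map_mono h21 (hJ2 a ha')
      obtain ⟨J, hJc, hJt⟩ := hcommon t (fun g hg => hFle (htF ▸ Submodule.subset_span hg))
      have hFJ : F ≤ Submodule.map (Algebra.linearMap D K) J := by
        rw [← htF]
        exact Submodule.span_le.2 hJt
      have hmapJbot : Submodule.map (Algebra.linearMap D K) J ≠ ⊥ :=
        fun h => hFbot (le_bot_iff.mp (h ▸ hFJ))
      have hxJ : (Algebra.linearMap D K) x ∈ s.star (Submodule.map (Algebra.linearMap D K) J) :=
        s.star_mono _ _ hFbot hmapJbot hFJ hxF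
      have hxJ' : x ∈ J := (hcS hJc).1.2 ▸ Submodule.mem_comap.mpr hxJ
      exact le_sSup hJc hxJ'
    · intro x hx
      exact Submodule.mem_comap.mpr (s.le_star _ hmapUbot ⟨x, hx, rfl⟩)
  obtain ⟨m, hm_le, hmax⟩ := zorn_le_nonempty₀ S ih J0 ⟨h0, hTop⟩
  exact ⟨m, ⟨hmax.1.1, hmax.1.2,
    fun J hJ hJt hle => le_antisymm hle (hmax.2 ⟨hJ, hJt⟩ hle)⟩, hm_le⟩

end Aux3
section Aux4
set_option linter.unusedSectionVars false
variable {D K : Type*} [CommRing D] [IsDomain D] [Field K] [Algebra D K] [IsFractionRing D K]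

lemma oneDiv_mul_le_div {Q : Ideal D}
    (hmul : ∀ a b : D, a ∉ Q → b ∉ Q → a * b ∉ Q) (I : Submodule D K) :
    ((1 : Submodule D K) / I) * locAt Q ≤ locAt Q / (I * locAt Q) := by
  rw [Submodule.le_div_iff_mul_le]
  calc ((1 : Submodule D K) / I) * locAt Q * (I * locAt Q)
      = (((1 : Submodule D K) / I) * I) * (locAt Q * locAt Q) := mul_mul_mul_comm _ _ _ _
    _ ≤ (1 : Submodule D K) * locAt Q :=
        mul_le_mul' (Submodule.le_div_iff_mul_le.mp le_rfl) (locAt_mul_self hmul)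
    _ = locAt Q := one_mul _

lemma div_locAt_eq {Q : Ideal D}
    (hmul : ∀ a b : D, a ∉ Q → b ∉ Q → a * b ∉ Q) (hQ : Q ≠ ⊤)
    {I : Submodule D K} (hfg : I.FG) :
    locAt (K := K) Q / (I * locAt Q) = ((1 : Submodule D K) / I) * locAt Q := by
  refine le_antisymm ?_ (oneDiv_mul_le_div hmul I)
  intro y hy
  obtain ⟨t, htI⟩ := hfg
  -- find a common denominator s with (algebraMap s * y) * g ∈ 1 for every generator g
  have hcommon : ∀ u : Finset K, (∀ g ∈ u, (g : K) ∈ I) →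
      ∃ s : D, s ∉ Q ∧ ∀ g ∈ u, algebraMap D K s * (y * g) ∈ (1 : Submodule D K) := by
    classical
    intro u
    induction u using Finset.induction with
    | empty =>
      exact fun _ => ⟨1, fun h => hQ (Ideal.eq_top_of_isUnit_mem _ h isUnit_one), by simp⟩
    | @insert g u' hnm ih2 =>
      intro hall
      obtain ⟨s2, hs2, h2⟩ := ih2 (fun a ha => hall a (Finset.mem_insert_of_mem ha))
      have hgI : (g : K) ∈ I := hall g (Finset.mem_insert_self g u')
      have hgIL : (g : K) ∈ I * locAt Q := by
        simpa using Submodule.mul_mem_mul hgI (one_mem_locAt (K := K) hQ)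
      have hyg : y * g ∈ locAt (K := K) Q :=
        Submodule.mem_div_iff_forall_mul_mem.mp hy _ hgIL
      obtain ⟨s1, hs1, h1⟩ := exists_denom_of_mem_locAt hmul hQ hyg
      refine ⟨s1 * s2, hmul _ _ hs1 hs2, fun a ha => ?_⟩
      rcases Finset.mem_insert.mp ha with rfl | ha'
      · have : algebraMap D K (s1 * s2) * (y * a) = s2 • (algebraMap D K s1 * (y * a)) := by
          rw [Algebra.smul_def, map_mul]; ring
        rw [this]; exact Submodule.smul_mem _ _ h1
      · have : algebraMap D K (s1 * s2) * (y * a) = s1 • (algebraMap D K s2 * (y * a)) := by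
          rw [Algebra.smul_def, map_mul]; ring
        rw [this]; exact Submodule.smul_mem _ _ (h2 a ha')
  obtain ⟨s, hsQ, hs⟩ := hcommon t (fun g hg => htI ▸ Submodule.subset_span hg)
  have hs0 : s ≠ 0 := fun h => hsQ (h ▸ Q.zero_mem)
  have hsK0 : algebraMap D K s ≠ 0 := by
    intro h; apply hs0; apply alg_inj (K := K)
    simp only [Algebra.linearMap_apply, map_zero]; exact h
  have hw : algebraMap D K s * y ∈ (1 : Submodule D K) / I := by
    rw [Submodule.mem_div_iff_forall_mul_mem]
    intro z hz
    rw [← htI] at hz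
    induction hz using Submodule.span_induction with
    | mem g hg => rw [mul_assoc]; exact hs g hg
    | zero => simpa using Submodule.zero_mem _
    | add a b _ _ hia hib => rw [mul_add]; exact Submodule.add_mem _ hia hib
    | smul c a _ hia =>
      have : algebraMap D K s * y * (c • a) = c • (algebraMap D K s * y * a) := by
        rw [Algebra.smul_def, Algebra.smul_def]; ring
      rw [this]
      exact Submodule.smul_mem _ _ hia
  have hy_eq : y = (algebraMap D K s * y) * (algebraMap D K s)⁻¹ := by
    field_simp
  rw [hy_eq]
  exact Submodule.mul_mem_mul hw (inv_mem_locAt hsQ)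

end Aux4
set_option linter.unusedSectionVars false in
set_option maxHeartbeats 1000000 in
theorem stmt19 (s : SemistarOperation D K) (hft : IsFiniteTypeOp s)
    (I : Submodule D K) (hI : IsFracIdeal I) (hfg : I.FG) :
    IsStarInv s I ↔
    ∀ Q : Ideal D, QuasiStarMax s.star Q →
      (I * locAt Q) * (locAt Q / (I * locAt Q)) = locAt Q := by
  obtain ⟨hIbot, d, hd0, hd⟩ := hI
  have hdinv : algebraMap D K d ∈ (1 : Submodule D K) / I :=
    Submodule.mem_div_iff_forall_mul_mem.mpr (fun y hy => hd y hy)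
  have hdK0 : algebraMap D K d ≠ 0 := by
    intro h; apply hd0; apply alg_inj (K := K)
    simp only [Algebra.linearMap_apply, map_zero]; exact h
  have hIIbot : I * ((1 : Submodule D K) / I) ≠ ⊥ := by
    obtain ⟨e, he, he0⟩ := Submodule.ne_bot_iff I |>.mp hIbot
    rw [Submodule.ne_bot_iff]
    exact ⟨e * algebraMap D K d, Submodule.mul_mem_mul he hdinv, mul_ne_zero he0 hdK0⟩
  have h1K : (1 : Submodule D K) ≠ ⊥ := by
    rw [Submodule.ne_bot_iff]
    exact ⟨1, Submodule.one_le.mp le_rfl, one_ne_zero⟩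
  have hII_le_one : I * ((1 : Submodule D K) / I) ≤ 1 := by
    rw [mul_comm]; exact Submodule.le_div_iff_mul_le.mp le_rfl
  set J : Ideal D := (I * ((1 : Submodule D K) / I)).comap (Algebra.linearMap D K) with hJ
  have hmapJ : Submodule.map (Algebra.linearMap D K) J = I * ((1 : Submodule D K) / I) := by
    rw [hJ, Submodule.map_comap_eq, ← Submodule.one_eq_range]
    exact inf_eq_right.mpr hII_le_one
  have hJbot : J ≠ ⊥ := fun h => hIIbot (by rw [← hmapJ, h, Submodule.map_bot])
  constructor
  · intro hinv Q hQmax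
    have hmul := quasiStarMax_mul_notMem s hQmax
    have hQtop := hQmax.2.1
    set L := locAt (K := K) Q with hL
    have hQnotle : ¬ J ≤ Q := by
      intro hle
      have h1 : (1 : K) ∈ s.star (Submodule.map (Algebra.linearMap D K) J) := by
        rw [hmapJ, hinv]
        exact s.le_star 1 h1K (Submodule.one_le.mp le_rfl)
      have hmapQbot : Submodule.map (Algebra.linearMap D K) Q ≠ ⊥ := map_ne_bot hQmax.1.1
      have hmapJbot : Submodule.map (Algebra.linearMap D K) J ≠ ⊥ := map_ne_bot hJbot
      have h2 : (1 : K) ∈ s.star (Submodule.map (Algebra.linearMap D K) Q) :=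
        s.star_mono _ _ hmapJbot hmapQbot (Submodule.map_mono hle) h1
      have : (1 : D) ∈ Q := by
        rw [← hQmax.1.2]
        exact Submodule.mem_comap.mpr (by simpa using h2)
      exact hQtop (Ideal.eq_top_of_isUnit_mem _ this isUnit_one)
    obtain ⟨d₀, hd₀J, hd₀Q⟩ := SetLike.not_le_iff_exists.mp hQnotle
    have hd₀0 : d₀ ≠ 0 := fun h => hd₀Q (h ▸ Q.zero_mem)
    have hd₀K0 : algebraMap D K d₀ ≠ 0 := by
      intro h; apply hd₀0; apply alg_inj (K := K)
      simp only [Algebra.linearMap_apply, map_zero]; exact h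
    have hu : (algebraMap D K d₀)⁻¹ ∈ L := inv_mem_locAt hd₀Q
    have h1M : (1 : K) ∈ (I * L) * (L / (I * L)) := by
      have hd₀II : algebraMap D K d₀ ∈ I * ((1 : Submodule D K) / I) :=
        hmapJ ▸ ⟨d₀, hd₀J, rfl⟩
      have hLLL : L ≤ L * L := by
        intro x hx
        simpa using Submodule.mul_mem_mul hx (one_mem_locAt (K := K) hQtop)
      have hm2 : (I * ((1 : Submodule D K) / I)) * L ≤ (I * L) * (L / (I * L)) := by
        calc (I * ((1 : Submodule D K) / I)) * L
            ≤ (I * ((1 : Submodule D K) / I)) * (L * L) :=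
              mul_le_mul' le_rfl hLLL
          _ = (I * L) * (((1 : Submodule D K) / I) * L) := mul_mul_mul_comm _ _ _ _
          _ ≤ (I * L) * (L / (I * L)) :=
              mul_le_mul' le_rfl (oneDiv_mul_le_div hmul I)
      have : algebraMap D K d₀ * (algebraMap D K d₀)⁻¹ = 1 := mul_inv_cancel₀ hd₀K0
      rw [← this]
      exact hm2 (Submodule.mul_mem_mul hd₀II hu)
    apply le_antisymm
    · apply Submodule.mul_le.2
      intro x hx y hy
      rw [mul_comm]
      exact Submodule.mem_div_iff_forall_mul_mem.mp hy x hx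
    · intro x hx
      have hLM : L * ((I * L) * (L / (I * L))) ≤ (I * L) * (L / (I * L)) := by
        calc L * ((I * L) * (L / (I * L))) = (L * (I * L)) * (L / (I * L)) := (mul_assoc _ _ _).symm
          _ = (I * (L * L)) * (L / (I * L)) := by rw [mul_left_comm]
          _ ≤ (I * L) * (L / (I * L)) :=
              mul_le_mul' (mul_le_mul' le_rfl (locAt_mul_self hmul)) le_rfl
      simpa using hLM (Submodule.mul_mem_mul hx h1M)
  · intro h
    have hle : s.star (I * ((1 : Submodule D K) / I)) ≤ s.star 1 :=
      s.star_mono _ _ hIIbot h1K hII_le_one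
    have key : (1 : K) ∈ s.star (I * ((1 : Submodule D K) / I)) := by
      by_contra hnot
      obtain ⟨hqsi, hleJ⟩ := quasi_closure (K := K) s hJbot
      set J' : Ideal D := (s.star (Submodule.map (Algebra.linearMap D K) J)).comap
        (Algebra.linearMap D K) with hJ'
      have hJ'top : J' ≠ ⊤ := by
        intro htop
        apply hnot
        have : (1 : D) ∈ J' := htop ▸ trivial
        rw [hJ'] at this
        have := Submodule.mem_comap.mp this
        rw [hmapJ] at this
        simpa using this
      obtain ⟨Q, hQmax, hJ'Q⟩ := exists_quasiStarMax s hft hqsi hJ'top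
      have hJQ : J ≤ Q := le_trans hleJ hJ'Q
      have hmul := quasiStarMax_mul_notMem s hQmax
      have hQtop := hQmax.2.1
      have hinvQ := h Q hQmax
      set L := locAt (K := K) Q with hL
      have h1L : (1 : K) ∈ (I * L) * (L / (I * L)) := by
        rw [hinvQ]; exact one_mem_locAt hQtop
      rw [div_locAt_eq hmul hQtop hfg] at h1L
      have h1L' : (1 : K) ∈ (Submodule.map (Algebra.linearMap D K) J) * L := by
        have e1 : (I * L) * (((1 : Submodule D K) / I) * L)
            = (I * ((1 : Submodule D K) / I)) * (L * L) := mul_mul_mul_comm _ _ _ _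
        have e2 : (I * ((1 : Submodule D K) / I)) * (L * L)
            ≤ (Submodule.map (Algebra.linearMap D K) J) * L := by
          rw [hmapJ]
          exact mul_le_mul' le_rfl (locAt_mul_self hmul)
        exact e2 (e1 ▸ h1L)
      -- extract denominator
      have hP : ∃ t : D, t ∉ Q ∧ algebraMap D K t * 1 ∈ Submodule.map (Algebra.linearMap D K) J := by
        refine Submodule.mul_induction_on h1L' ?_ ?_
        · intro m hm n hn
          obtain ⟨t, htQ, htn⟩ := exists_denom_of_mem_locAt hmul hQtop hn
          rw [Submodule.one_eq_range] at htn
          obtain ⟨c, hc⟩ := htn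
          refine ⟨t, htQ, ?_⟩
          have hthis : algebraMap D K t * (m * n) = (algebraMap D K t * n) * m := by ring
          rw [hthis, ← hc, Algebra.linearMap_apply, ← Algebra.smul_def]
          exact Submodule.smul_mem _ _ hm
        · rintro x y ⟨t1, ht1, hx1⟩ ⟨t2, ht2, hy2⟩
          refine ⟨t1 * t2, hmul _ _ ht1 ht2, ?_⟩
          have : algebraMap D K (t1 * t2) * (x + y)
              = t2 • (algebraMap D K t1 * x) + t1 • (algebraMap D K t2 * y) := by
            rw [Algebra.smul_def, Algebra.smul_def, map_mul]; ring
          rw [this]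
          exact Submodule.add_mem _ (Submodule.smul_mem _ _ hx1) (Submodule.smul_mem _ _ hy2)
      obtain ⟨t, htQ, htJ⟩ := hP
      rw [mul_one] at htJ
      have : t ∈ J := by
        have := Submodule.comap_map_eq_of_injective (alg_inj (K := K)) J
        rw [← this]
        exact Submodule.mem_comap.mpr htJ
      exact htQ (hJQ this)
    have hsbot : s.star (I * ((1 : Submodule D K) / I)) ≠ ⊥ := by
      rw [Submodule.ne_bot_iff]; exact ⟨1, key, one_ne_zero⟩
    have hone_le : (1 : Submodule D K) ≤ s.star (I * ((1 : Submodule D K) / I)) :=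
      Submodule.one_le.mpr key
    have hge : s.star 1 ≤ s.star (s.star (I * ((1 : Submodule D K) / I))) :=
      s.star_mono _ _ h1K hsbot hone_le
    rw [s.star_idem _ hIIbot] at hge
    exact le_antisymm hle hge
end
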